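/- For nontrivial characters A²B̄ and φĀB on F_q, the Gauss-sum representation Σ_t Σ_{w≠0} Σ_{z≠0} A²B̄(w)·φĀB(z)·ζ^{w(1-t)+z(y-t²)} equals A²B̄(2)·φ(-1)·G(φ)·G(A)·Σ_w A²B̄(w)·Ā(y-1+(w+1)²), provided A is nontrivial. -/

import Mathlib

open Complex Finset

variable {F : Type*} [Field F] [Fintype F]

/-- Canonical additive character `ζ^y = exp((2πi/p)·Tr_{F_q/F_p}(y))`. -/
noncomputable def zetaChar (p : ℕ) [Fact p.Prime] [CharP F p] (y : F) : ℂ :=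
  letI := ZMod.algebra F p
  Complex.exp (2 * Real.pi * Complex.I * ((Algebra.trace (ZMod p) F y).val : ℂ) / p)

/-- Gauss sum `G(A) = Σ_y A(y) ζ^y`. -/
noncomputable def gaussS (p : ℕ) [Fact p.Prime] [CharP F p] (A : MulChar F ℂ) : ℂ :=
  ∑ y : F, A y * zetaChar p y

/-- Jacobi sum `J(A,B) = Σ_y A(y) B(1-y)`. -/
noncomputable def jacobiS (A B : MulChar F ℂ) : ℂ :=
  ∑ y : F, A y * B (1 - y)

/-- Finite field hypergeometric `₂F₁(A,B;C;x) = (ε(x)/q) Σ_y B(y) B̄C(y-1) Ā(1-xy)`. -/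
noncomputable def F21 (A B C : MulChar F ℂ) (x : F) : ℂ :=
  ((1 : MulChar F ℂ) x / (Fintype.card F : ℂ)) *
    ∑ y : F, B y * (B⁻¹ * C) (y - 1) * A⁻¹ (1 - x * y)

/-- Binomial coefficient `(A choose B) = (B(-1)/q) J(A, B̄)`. -/
noncomputable def binom (A B : MulChar F ℂ) : ℂ :=
  B (-1) / (Fintype.card F : ℂ) * jacobiS A B⁻¹

/-- Pseudo hypergeometric function `F*(C,D;x)`. -/
noncomputable def Fstar (C D : MulChar F ℂ) (x : F) : ℂ :=
  letI : Fintype (MulChar F ℂ) := Fintype.ofFinite _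
  (Fintype.card F : ℂ) / ((Fintype.card F : ℂ) - 1) *
      ∑ χ : MulChar F ℂ, binom (C * χ ^ 2) χ * binom (C * χ) (D * χ) * χ (x / 4)
    + (C * D) (-1) * C⁻¹ (x / 4) / (Fintype.card F : ℂ)


/-!
Substituting `w = 2zv` turns the exponent into `z(y - 1 + (v + 1)²) - z(t + v)²`, so the sum over
`t` is the quadratic Gauss sum `φ(-z) G(φ)` (the number of square roots of `u` is `1 + φ(u)`).
The characters then combine as `A²B̄ · φ · φĀB = A`, and the remaining sum over `z` is the Gauss
sum `Ā(y - 1 + (v + 1)²) G(A)`.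
-/

namespace MulChar

lemma apply_eq_neg_one_of_sq_eq_one {M R : Type*} [CommMonoid M] [CommRing R] [IsDomain R]
    {g : Mˣ} (hg : ∀ x, x ∈ Subgroup.zpowers g) {χ : MulChar M R} (hχ : χ ≠ 1)
    (hχ2 : χ ^ 2 = 1) : χ g = -1 := by
  have hsq : χ g ^ 2 = 1 := by rw [← pow_apply_coe, hχ2, one_apply_coe]
  refine (sq_eq_one_iff.mp hsq).resolve_left fun h ↦ hχ ?_
  rwa [eq_iff hg, one_apply_coe]

variable {R : Type*} [CommRing R] [IsDomain R]

theorem eq_quadraticChar_of_sq_eq_one [DecidableEq F] [CharZero R] (hF : ringChar F ≠ 2)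
    {χ : MulChar F R} (hχ : χ ≠ 1) (hχ2 : χ ^ 2 = 1) :
    χ = (quadraticChar F).ringHomComp (Int.castRingHom R) := by
  obtain ⟨g, hg⟩ := IsCyclic.exists_generator (α := Fˣ)
  have hq := (quadraticChar_isQuadratic F).comp (Int.castRingHom R)
  rw [eq_iff hg, apply_eq_neg_one_of_sq_eq_one hg hχ hχ2,
    apply_eq_neg_one_of_sq_eq_one hg ((ringHomComp_ne_one_iff Int.cast_injective).mpr
      (quadraticChar_ne_one hF)) hq.sq_eq_one]

lemma card_sqrts_eq_add_one [DecidableEq F] [CharZero R] (hF : ringChar F ≠ 2)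
    {χ : MulChar F R} (hχ : χ ≠ 1) (hχ2 : χ ^ 2 = 1) (u : F) :
    (#{s | s ^ 2 = u} : R) = χ u + 1 := by
  have h := congrArg (Int.cast : ℤ → R) (quadraticChar_card_sqrts hF u)
  rw [Set.toFinset_ofPred] at h
  push_cast at h
  rw [h, eq_quadraticChar_of_sq_eq_one hF hχ hχ2, ringHomComp_apply, eq_intCast]

lemma gaussSum_mulShift_of_ne_one {χ : MulChar F R} (hχ : χ ≠ 1) (ψ : AddChar F R) (c : F) :
    gaussSum χ (ψ.mulShift c) = χ⁻¹ c * gaussSum χ ψ := by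
  rcases eq_or_ne c 0 with rfl | hc
  · simp [gaussSum, sum_eq_zero_of_ne_one hχ]
  · exact gaussSum_mulShift_eq χ ψ (Units.mk0 c hc)

end MulChar

namespace AddChar

variable {R : Type*} [CommRing R] [IsDomain R] [CharZero R]

theorem sum_mul_sq (hF : ringChar F ≠ 2) {ψ : AddChar F R} (hψ : ψ.IsPrimitive)
    {χ : MulChar F R} (hχ : χ ≠ 1) (hχ2 : χ ^ 2 = 1) {a : F} (ha : a ≠ 0) :
    ∑ s, ψ (a * s ^ 2) = χ a * gaussSum χ ψ := by
  classical
  have hχinv : χ⁻¹ = χ := inv_eq_of_mul_eq_one_right (by rw [← sq, hχ2])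
  calc ∑ s, ψ (a * s ^ 2) = ∑ u, (#{s | s ^ 2 = u} : R) * ψ (a * u) := by
        rw [← sum_fiberwise univ (· ^ 2)]
        refine sum_congr rfl fun u _ ↦ ?_
        rw [sum_congr rfl fun s hs ↦ by rw [(mem_filter.mp hs).2], sum_const, nsmul_eq_mul]
    _ = gaussSum χ (ψ.mulShift a) + ∑ u, ψ (u * a) := by
        simp only [MulChar.card_sqrts_eq_add_one hF hχ hχ2, add_mul, one_mul, sum_add_distrib,
          gaussSum, mulShift_apply, mul_comm a, mul_comm (χ _)]
    _ = χ a * gaussSum χ ψ := by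
        rw [sum_mulShift a hψ, if_neg ha, Nat.cast_zero, add_zero,
          MulChar.gaussSum_mulShift_of_ne_one hχ, hχinv]

end AddChar

variable {R : Type*} [CommRing R] [IsDomain R] [CharZero R]

theorem sum_sum_mulChar_mul_addChar_quadratic (hF : ringChar F ≠ 2) {ψ : AddChar F R}
    (hψ : ψ.IsPrimitive) {φ : MulChar F R} (hφ : φ ≠ 1) (hφ2 : φ ^ 2 = 1) (C : MulChar F R)
    (y : F) {z : F} (hz : z ≠ 0) :
    ∑ t, ∑ w, C w * ψ (w * (1 - t) + z * (y - t ^ 2)) =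
      C (2 * z) * φ (-z) * gaussSum φ ψ * ∑ v, C v * ψ (z * (y - 1 + (v + 1) ^ 2)) := by
  have h2z : 2 * z ≠ 0 := mul_ne_zero (Ring.two_ne_zero hF) hz
  calc ∑ t, ∑ w, C w * ψ (w * (1 - t) + z * (y - t ^ 2))
      = ∑ v, ∑ t, C (2 * z * v) * ψ (2 * z * v * (1 - t) + z * (y - t ^ 2)) := by
        rw [sum_comm]
        exact (Fintype.sum_bijective _ (mulLeft_bijective₀ _ h2z) _ _ fun v ↦ rfl).symm
    _ = ∑ v, C (2 * z) * C v * ψ (z * (y - 1 + (v + 1) ^ 2)) * ∑ t, ψ (-z * (t + v) ^ 2) := by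
        refine sum_congr rfl fun v _ ↦ ?_
        rw [mul_sum, map_mul]
        refine sum_congr rfl fun t _ ↦ ?_
        rw [mul_assoc (C (2 * z) * C v), ← AddChar.map_add_eq_mul]
        congr 2
        ring
    _ = _ := by
        have hgauss (v : F) : ∑ t, ψ (-z * (t + v) ^ 2) = φ (-z) * gaussSum φ ψ :=
          (Fintype.sum_equiv (Equiv.addRight v) _ _ fun _ ↦ rfl).trans
            (AddChar.sum_mul_sq hF hψ hφ hφ2 (neg_ne_zero.mpr hz))
        simp_rw [hgauss, mul_sum]
        exact sum_congr rfl fun v _ ↦ by ring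

theorem sum_sum_sum_mulChar_mul_addChar_eq (hF : ringChar F ≠ 2) {ψ : AddChar F R}
    (hψ : ψ.IsPrimitive) {φ : MulChar F R} (hφ : φ ≠ 1) (hφ2 : φ ^ 2 = 1)
    {A : MulChar F R} (hA : A ≠ 1) (B : MulChar F R) (y : F) :
    ∑ t, ∑ w, ∑ z, (A ^ 2 * B⁻¹) w * (φ * A⁻¹ * B) z * ψ (w * (1 - t) + z * (y - t ^ 2)) =
      (A ^ 2 * B⁻¹) 2 * φ (-1) * gaussSum φ ψ * gaussSum A ψ *
        ∑ w, (A ^ 2 * B⁻¹) w * A⁻¹ (y - 1 + (w + 1) ^ 2) := by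
  set C := A ^ 2 * B⁻¹
  set D := φ * A⁻¹ * B
  have hCD : C * φ * D = A :=
    calc C * φ * D = φ ^ 2 * (A ^ 2 * A⁻¹) * (B⁻¹ * B) := by simp only [C, D, sq]; ac_rfl
      _ = A := by rw [hφ2, sq, mul_inv_cancel_right, inv_mul_cancel, one_mul, mul_one]
  clear_value C D
  have hcoeff (z : F) : D z * (C (2 * z) * φ (-z)) = C 2 * φ (-1) * A z := by
    rw [← hCD, MulChar.mul_apply, MulChar.mul_apply, neg_eq_neg_one_mul, map_mul, map_mul]
    ring
  have hgauss (u : F) : ∑ z, A z * ψ (z * u) = A⁻¹ u * gaussSum A ψ := by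
    rw [← MulChar.gaussSum_mulShift_of_ne_one hA]
    simp only [gaussSum, AddChar.mulShift_apply, mul_comm u]
  calc _ = ∑ z, D z * ∑ t, ∑ w, C w * ψ (w * (1 - t) + z * (y - t ^ 2)) := by
        simp_rw [mul_sum]
        rw [sum_congr rfl fun t _ ↦ sum_comm, sum_comm]
        exact sum_congr rfl fun z _ ↦ sum_congr rfl fun t _ ↦ sum_congr rfl fun w _ ↦ by ring
    _ = ∑ z, D z * (C (2 * z) * φ (-z) * gaussSum φ ψ *
          ∑ v, C v * ψ (z * (y - 1 + (v + 1) ^ 2))) := by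
        refine sum_congr rfl fun z _ ↦ ?_
        rcases eq_or_ne z 0 with rfl | hz
        · simp [MulChar.map_zero]
        · rw [sum_sum_mulChar_mul_addChar_quadratic hF hψ hφ hφ2 C y hz]
    _ = C 2 * φ (-1) * gaussSum φ ψ * ∑ v, C v * ∑ z, A z * ψ (z * (y - 1 + (v + 1) ^ 2)) := by
        simp_rw [mul_sum]
        rw [sum_comm]
        refine sum_congr rfl fun v _ ↦ sum_congr rfl fun z _ ↦ ?_
        linear_combination (gaussSum φ ψ * C v * ψ (z * (y - 1 + (v + 1) ^ 2))) * hcoeff z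
    _ = _ := by
        simp_rw [hgauss, mul_sum]
        exact sum_congr rfl fun v _ ↦ by ring

section Zeta

variable (p : ℕ) [Fact p.Prime]

noncomputable def zetaAddChar {K : Type*} [Field K] [CharP K p] : AddChar K ℂ :=
  letI := ZMod.algebra K p
  ZMod.stdAddChar.compAddMonoidHom (Algebra.trace (ZMod p) K).toAddMonoidHom

lemma zetaAddChar_apply {K : Type*} [Field K] [CharP K p] (x : K) :
    zetaAddChar p x = zetaChar p x := by
  simp [zetaAddChar, zetaChar, ZMod.stdAddChar_apply, ZMod.toCircle_apply]

variable [CharP F p]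

lemma gaussS_eq_gaussSum (χ : MulChar F ℂ) : gaussS p χ = gaussSum χ (zetaAddChar p) := by
  simp only [gaussS, gaussSum, zetaAddChar_apply]

lemma isPrimitive_zetaAddChar : (zetaAddChar (K := F) p).IsPrimitive := by
  obtain rfl : ringChar F = p := ringChar.eq F p
  let := ZMod.algebra F (ringChar F)
  refine AddChar.IsPrimitive.of_ne_one fun h ↦ ?_
  obtain ⟨b, hb⟩ := FiniteField.trace_to_zmod_nondegenerate F one_ne_zero
  rw [one_mul] at hb
  refine hb (ZMod.injective_stdAddChar ?_)
  simpa [zetaAddChar] using DFunLike.congr_fun h b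

end Zeta

theorem triple_sum_eval_general [DecidableEq F] (p : ℕ) [Fact p.Prime] [CharP F p] (hp : p ≠ 2)
    (φ : MulChar F ℂ) (hφ : φ ≠ 1) (hφ2 : φ * φ = 1)
    (A B : MulChar F ℂ) (hA : A ≠ 1)
    (y : F) :
    (∑ t : F, ∑ w ∈ Finset.univ \ {(0 : F)}, ∑ z ∈ Finset.univ \ {(0 : F)},
        (A ^ 2 * B⁻¹) w * (φ * A⁻¹ * B) z * zetaChar p (w * (1 - t) + z * (y - t ^ 2))) =
      (A ^ 2 * B⁻¹) (2 : F) * φ (-1) * gaussS p φ * gaussS p A *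
        ∑ w : F, (A ^ 2 * B⁻¹) w * A⁻¹ (y - 1 + (w + 1) ^ 2) := by
  have hF : ringChar F ≠ 2 := ringChar.eq F p ▸ hp
  simp only [sdiff_singleton_eq_erase, gaussS_eq_gaussSum, ← zetaAddChar_apply]
  rw [← sum_sum_sum_mulChar_mul_addChar_eq hF (isPrimitive_zetaAddChar p) hφ (sq φ ▸ hφ2) hA]
  refine sum_congr rfl fun t _ ↦ ?_
  rw [sum_erase _ (by simp [MulChar.map_zero])]
  exact sum_congr rfl fun w _ ↦ sum_erase _ (by simp [MulChar.map_zero])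

/-- Gauss-sum evaluation of the triple sum from the proof of Lemma 1. -/
theorem triple_sum_eval [DecidableEq F] (p : ℕ) [Fact p.Prime] [CharP F p] (hp : p ≠ 2)
    (φ : MulChar F ℂ) (hφ : φ ≠ 1) (hφ2 : φ * φ = 1)
    (A B : MulChar F ℂ) (hA : A ≠ 1) (hA2B : A ^ 2 * B⁻¹ ≠ 1) (hφAB : φ * A⁻¹ * B ≠ 1)
    (y : F) :
    (∑ t : F, ∑ w ∈ Finset.univ \ {(0 : F)}, ∑ z ∈ Finset.univ \ {(0 : F)},
        (A ^ 2 * B⁻¹) w * (φ * A⁻¹ * B) z * zetaChar p (w * (1 - t) + z * (y - t ^ 2))) =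
      (A ^ 2 * B⁻¹) (2 : F) * φ (-1) * gaussS p φ * gaussS p A *
        ∑ w : F, (A ^ 2 * B⁻¹) w * A⁻¹ (y - 1 + (w + 1) ^ 2) :=
  triple_sum_eval_general p hp φ hφ hφ2 A B hA y
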